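/- arXiv:2512.21182 — 2 statements merged into one kernel-verified Lean document; each statement's English description precedes it below -/
import Mathlib

section
/- Let (f : C → D, g : D → C, h : C → C) be maps between chain complexes such that f and g are chain maps of degree 0, h has degree 1, fg = id_D, id_C − gf = d_C h + h d_C, h∘h = 0, f∘h = 0, and f is surjective. Then h∘g = 0. -/
/-!
Write the homotopy identity as `id = dh + hd + gf`. Composing it with `h` on the left, `hh = 0`
and `fh = 0` give `h = hdh`. Inserting it between `h` and `g`, `hh = 0` and `fg = id` give
`hg = hdhg + hg`, so `hdhg = 0`. Hence `hg = hdhg = 0`.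
-/

open CategoryTheory Limits

namespace Homotopy

variable {V : Type*} [Category V] [Preadditive V] {ι : Type*} {c : ComplexShape ι}
  {C : HomologicalComplex V c}

lemma hom_comp_dNext {φ : C ⟶ C} (h : Homotopy (𝟙 C) φ)
    (hh : ∀ i j k, h.hom i j ≫ h.hom j k = 0) (hφ : ∀ i j, h.hom i j ≫ φ.f j = 0) (i j : ι) :
    h.hom i j ≫ dNext j h.hom = h.hom i j := by
  have hj := congrArg (h.hom i j ≫ ·) (h.comm j)
  simp only [HomologicalComplex.id_f, Category.comp_id, Preadditive.comp_add, hφ,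
    add_zero] at hj
  rw [prevD, AddMonoidHom.mk'_apply, reassoc_of% hh, zero_comp, add_zero] at hj
  exact hj.symm

lemma comp_prevD_comp_hom_eq_zero {D : HomologicalComplex V c} {f : C ⟶ D} {g : D ⟶ C}
    (h : Homotopy (𝟙 C) (f ≫ g)) (hfg : g ≫ f = 𝟙 D)
    (hh : ∀ i j k, h.hom i j ≫ h.hom j k = 0) (i j : ι) :
    g.f i ≫ prevD i h.hom ≫ h.hom i j = 0 := by
  have hi := congrArg (g.f i ≫ · ≫ h.hom i j) (h.comm i)
  have hgfg : g.f i ≫ f.f i ≫ g.f i = g.f i := by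
    rw [← HomologicalComplex.comp_f_assoc, hfg, HomologicalComplex.id_f, Category.id_comp]
  simp only [HomologicalComplex.id_f, Category.id_comp, Preadditive.add_comp,
    Preadditive.comp_add, HomologicalComplex.comp_f, Category.assoc, reassoc_of% hgfg] at hi
  rw [dNext, AddMonoidHom.mk'_apply, Category.assoc, hh, comp_zero, comp_zero, zero_add,
    eq_comm, add_eq_right] at hi
  exact hi

theorem comp_hom_eq_zero {D : HomologicalComplex V c} {f : C ⟶ D} {g : D ⟶ C}
    (h : Homotopy (𝟙 C) (f ≫ g)) (hfg : g ≫ f = 𝟙 D)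
    (hh : ∀ i j k, h.hom i j ≫ h.hom j k = 0) (hfh : ∀ i j, h.hom i j ≫ f.f j = 0) (i j : ι) :
    g.f i ≫ h.hom i j = 0 := by
  by_cases hji : c.Rel j i
  · have hφ : ∀ i j, h.hom i j ≫ (f ≫ g).f j = 0 := fun i j => by
      rw [HomologicalComplex.comp_f, reassoc_of% hfh, zero_comp]
    calc g.f i ≫ h.hom i j = g.f i ≫ h.hom i j ≫ dNext j h.hom := by
          rw [hom_comp_dNext h hh hφ]
      _ = g.f i ≫ prevD i h.hom ≫ h.hom i j := by
          rw [dNext_eq _ hji, prevD_eq _ hji, Category.assoc]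
      _ = 0 := comp_prevD_comp_hom_eq_zero h hfg hh i j
  · rw [h.zero i j hji, comp_zero]

end Homotopy

namespace ChainComplex

variable {V : Type*} [Category V] [Preadditive V] {C D : ChainComplex V ℕ}

lemma homotopy_hom_comp_hom_eq_zero {φ ψ : C ⟶ C} (h : Homotopy φ ψ)
    (hh : ∀ i, h.hom i (i + 1) ≫ h.hom (i + 1) (i + 2) = 0) (i j k : ℕ) :
    h.hom i j ≫ h.hom j k = 0 := by
  by_cases hij : j = i + 1
  · by_cases hjk : k = j + 1
    · subst hij hjk
      exact hh i
    · rw [h.zero j k (by simpa using Ne.symm hjk), comp_zero]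
  · rw [h.zero i j (by simpa using Ne.symm hij), zero_comp]

lemma homotopy_hom_comp_eq_zero {φ ψ : C ⟶ C} (h : Homotopy φ ψ) (χ : C ⟶ D)
    (hχ : ∀ i, h.hom i (i + 1) ≫ χ.f (i + 1) = 0) (i j : ℕ) :
    h.hom i j ≫ χ.f j = 0 := by
  by_cases hij : j = i + 1
  · subst hij
    exact hχ i
  · rw [h.zero i j (by simpa using Ne.symm hij), zero_comp]

end ChainComplex

theorem statement0_general {R : Type} [CommRing R] {C D : ChainComplex (ModuleCat R) ℕ}
    (f : C ⟶ D) (g : D ⟶ C) (h : Homotopy (𝟙 C) (f ≫ g))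
    (hfg : g ≫ f = 𝟙 D)
    (hhh : ∀ i, h.hom i (i + 1) ≫ h.hom (i + 1) (i + 2) = 0)
    (hfh : ∀ i, h.hom i (i + 1) ≫ f.f (i + 1) = 0) :
    ∀ i, g.f i ≫ h.hom i (i + 1) = 0 :=
  fun i => h.comp_hom_eq_zero hfg (ChainComplex.homotopy_hom_comp_hom_eq_zero h hhh)
    (ChainComplex.homotopy_hom_comp_eq_zero h f hfh) i (i + 1)

theorem statement0 {R : Type} [CommRing R] {C D : ChainComplex (ModuleCat R) ℕ}
    (f : C ⟶ D) (g : D ⟶ C) (h : Homotopy (𝟙 C) (f ≫ g))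
    (hfg : g ≫ f = 𝟙 D)
    (hhh : ∀ i, h.hom i (i + 1) ≫ h.hom (i + 1) (i + 2) = 0)
    (hfh : ∀ i, h.hom i (i + 1) ≫ f.f (i + 1) = 0)
    (hsurj : ∀ i, Function.Surjective (f.f i)) :
    ∀ i, g.f i ≫ h.hom i (i + 1) = 0 :=
  statement0_general f g h hfg hhh hfh
end

section
/- The de Rham map evaluates to 1 on the corresponding Whitney form: for injective monotone f : [p] → [n] with associated face σ = (f(0),…,f(p)), the integral over Δ^σ of ω_f equals 1, i.e., ∫_{Δᵖ} f*ω_f = 1. -/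
/-!
The polynomial de Rham algebra `(A_PL)_n` on the standard `n`-simplex: the free
graded-commutative ℚ-algebra on generators `t₀, …, t_n` of degree 0 and
`dt₀, …, dt_n` of degree 1, modulo the relations `Σᵢ tᵢ = 1` and `Σᵢ dtᵢ = 0`.
We realize it as a `RingQuot` of the free algebra on `2(n+1)` generators by the
(graded-)commutation relations and the two sum relations.
-/

/-- Generator names: `Sum.inl i` is `tᵢ` (degree 0), `Sum.inr i` is `dtᵢ` (degree 1). -/
abbrev FA (n : ℕ) := FreeAlgebra ℚ (Fin (n + 1) ⊕ Fin (n + 1))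

/-- The generator `tᵢ` in the free algebra. -/
noncomputable def tGen {n : ℕ} (i : Fin (n + 1)) : FA n := FreeAlgebra.ι ℚ (Sum.inl i)

/-- The generator `dtᵢ` in the free algebra. -/
noncomputable def dtGen {n : ℕ} (i : Fin (n + 1)) : FA n := FreeAlgebra.ι ℚ (Sum.inr i)

/-- The defining relations of `(A_PL)_n`: the `tᵢ` are central among generators,
the `dtᵢ` anticommute (degree 1), `Σᵢ tᵢ = 1` and `Σᵢ dtᵢ = 0`. -/
inductive APLRel (n : ℕ) : FA n → FA n → Prop
  | comm_tt (i j : Fin (n + 1)) : APLRel n (tGen i * tGen j) (tGen j * tGen i)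
  | comm_tdt (i j : Fin (n + 1)) : APLRel n (tGen i * dtGen j) (dtGen j * tGen i)
  | anticomm (i j : Fin (n + 1)) : APLRel n (dtGen i * dtGen j) (-(dtGen j * dtGen i))
  | sum_t : APLRel n (∑ i, tGen i) 1
  | sum_dt : APLRel n (∑ i, dtGen i) 0

/-- The polynomial de Rham algebra `(A_PL)_n` on the standard `n`-simplex. -/
abbrev APL (n : ℕ) := RingQuot (APLRel n)

/-- The element `tᵢ ∈ (A_PL)_n`. -/
noncomputable def t {n : ℕ} (i : Fin (n + 1)) : APL n :=
  RingQuot.mkAlgHom ℚ (APLRel n) (tGen i)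

/-- The element `dtᵢ ∈ (A_PL)_n`. -/
noncomputable def dt {n : ℕ} (i : Fin (n + 1)) : APL n :=
  RingQuot.mkAlgHom ℚ (APLRel n) (dtGen i)

/-- The ordered list `[dt_{f(0)}, …, dt_{f(p)}]`. -/
noncomputable def dtList (p n : ℕ) (f : Fin (p + 1) → Fin (n + 1)) : List (APL n) :=
  (List.finRange (p + 1)).map fun j => dt (f j)

/-- The Whitney `p`-form associated to `f : [p] → [n]`:
`ω_f = p! Σᵢ (−1)ⁱ t_{f(i)} · dt_{f(0)} ⋯ (omit dt_{f(i)}) ⋯ dt_{f(p)}`. -/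
noncomputable def omega (p n : ℕ) (f : Fin (p + 1) → Fin (n + 1)) : APL n :=
  (p.factorial : ℚ) • ∑ i : Fin (p + 1),
    ((-1 : ℚ) ^ (i : ℕ)) • (t (f i) * ((dtList p n f).eraseIdx (i : ℕ)).prod)

/-!
Since `f` is injective, the pullback `F` sends `t_{f(i)} ↦ tᵢ` and `dt_{f(i)} ↦ dtᵢ`, so `F ω_f`
is the Whitney form of the top face of `Δᵖ`. Writing `tᵢ` as the monomial with exponent vector
the indicator of `i`, its `i`-th summand `(−1)ⁱ tᵢ dt₀ ⋯ (omit dtᵢ) ⋯ dt_p` integrates to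
`(−1)ⁱ (−1)ⁱ / (p+1)! = 1/(p+1)!`, and `p! · (p+1) / (p+1)! = 1`.
-/

lemma List.prod_finRange_map_pow_ite {M : Type*} [Monoid M] {m : ℕ} (g : Fin m → M)
    (i : Fin m) :
    ((List.finRange m).map fun k => g k ^ (if k = i then 1 else 0)).prod = g i := by
  rw [List.prod_map_eq_pow_single i _ fun k hk _ => by simp [hk]]
  simp [List.count_eq_one_of_mem (List.nodup_finRange m) (List.mem_finRange i)]

section Pullback

variable {p n : ℕ} {f : Fin (p + 1) → Fin (n + 1)} (F : APL n →ₐ[ℚ] APL p)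

lemma pullback_t_comp (hf : Function.Injective f)
    (hFt : ∀ i, F (t i) = ∑ j : Fin (p + 1), if f j = i then t j else 0) (i : Fin (p + 1)) :
    F (t (f i)) = t i := by
  simp [hFt, hf.eq_iff]

lemma pullback_dt_comp (hf : Function.Injective f)
    (hFdt : ∀ i, F (dt i) = ∑ j : Fin (p + 1), if f j = i then dt j else 0) (i : Fin (p + 1)) :
    F (dt (f i)) = dt i := by
  simp [hFdt, hf.eq_iff]

lemma pullback_prod_eraseIdx_dtList (hf : Function.Injective f)
    (hFdt : ∀ i, F (dt i) = ∑ j : Fin (p + 1), if f j = i then dt j else 0) (k : ℕ) :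
    F ((dtList p n f).eraseIdx k).prod = ((dtList p p fun j => j).eraseIdx k).prod := by
  rw [map_list_prod, ← List.eraseIdx_map]
  simp [dtList, Function.comp_def, pullback_dt_comp F hf hFdt]

end Pullback

lemma integral_t_mul_prod_eraseIdx_dtList {p : ℕ} (I : APL p →ₗ[ℚ] ℚ)
    (hI : ∀ (a : Fin (p + 1) → ℕ) (j : Fin (p + 1)),
      I ((((List.finRange (p + 1)).map fun i => t i ^ a i).prod) *
          ((dtList p p (fun j => j)).eraseIdx (j : ℕ)).prod) =
        (-1 : ℚ) ^ (j : ℕ) * ((∏ i, (a i).factorial : ℕ) : ℚ) /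
          (((∑ i, a i) + p).factorial : ℕ))
    (i : Fin (p + 1)) :
    I (t i * ((dtList p p fun j => j).eraseIdx i).prod) = (-1) ^ (i : ℕ) / (p + 1).factorial := by
  conv_lhs => rw [← List.prod_finRange_map_pow_ite t i]
  rw [hI]
  simp [apply_ite Nat.factorial, add_comm]

theorem statement14 (p n : ℕ) (f : Fin (p + 1) → Fin (n + 1)) (hf : StrictMono f)
    (F : APL n →ₐ[ℚ] APL p)
    (hFt : ∀ i, F (t i) = ∑ j : Fin (p + 1), if f j = i then t j else 0)
    (hFdt : ∀ i, F (dt i) = ∑ j : Fin (p + 1), if f j = i then dt j else 0)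
    (I : APL p →ₗ[ℚ] ℚ)
    (hI : ∀ (a : Fin (p + 1) → ℕ) (j : Fin (p + 1)),
      I ((((List.finRange (p + 1)).map fun i => t i ^ a i).prod) *
          ((dtList p p (fun j => j)).eraseIdx (j : ℕ)).prod) =
        (-1 : ℚ) ^ (j : ℕ) * ((∏ i, (a i).factorial : ℕ) : ℚ) /
          (((∑ i, a i) + p).factorial : ℕ)) :
    I (F (omega p n f)) = 1 := by
  have hterm (i : Fin (p + 1)) :
      (-1 : ℚ) ^ (i : ℕ) * I (F (t (f i) * ((dtList p n f).eraseIdx i).prod)) =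
        1 / (p + 1).factorial := by
    rw [map_mul, pullback_t_comp F hf.injective hFt,
      pullback_prod_eraseIdx_dtList F hf.injective hFdt,
      integral_t_mul_prod_eraseIdx_dtList I hI, mul_div_assoc', ← mul_pow]
    simp
  calc I (F (omega p n f))
      = p.factorial * ∑ i : Fin (p + 1),
          (-1 : ℚ) ^ (i : ℕ) * I (F (t (f i) * ((dtList p n f).eraseIdx i).prod)) := by
        simp [omega, map_sum, smul_eq_mul]
    _ = p.factorial * ((p + 1) * (1 / (p + 1).factorial)) := by
        rw [Finset.sum_congr rfl fun i _ => hterm i]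
        simp
    _ = 1 := by
        rw [Nat.factorial_succ]
        push_cast
        field_simp
end
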